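/- (Lemma 1.3.) If F = (f₁, f₂, {f_k}) ∈ čH²(α), then g := φ·f₁ ∈ H², and for every k one has f_k · φ(ζ_k) = g(ζ_k), where φ(ζ_k) := Σ_{n≥0} ĉ(φ,n)ζ_kⁿ ≠ 0 and g(ζ_k) := Σ_{n≥0} ĉ(g,n)ζ_kⁿ. In particular čH²(α) ⊆ ĤH²(α). -/

import Mathlib

open MeasureTheory Complex Filter ComplexConjugate
open scoped Real Topology

noncomputable section

instance : Fact ((0:ℝ) < 2 * Real.pi) := ⟨Real.two_pi_pos⟩

/-- The unit circle, modeled additively as `ℝ / 2πℤ`; the point `t` corresponds to `e^{it}`. -/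
abbrev 𝕋c : Type := AddCircle (2 * Real.pi)

/-- Normalized Lebesgue (Haar) measure on the circle. -/
abbrev m : Measure 𝕋c := AddCircle.haarAddCircle

/-- Squared `L²` norm. -/
def sqNorm (f : 𝕋c → ℂ) : ℝ := ∫ t, ‖f t‖ ^ 2 ∂m

/-- `‖P₋ g‖²`, expressed via Parseval: the sum of `|ĉ(g,n)|²` over `n < 0`. -/
def negSq (g : 𝕋c → ℂ) : ℝ := ∑' n : ℤ, if n < 0 then ‖fourierCoeff g n‖ ^ 2 else 0

/-- Membership in the Hardy space `H²`. -/
def InH2 (f : 𝕋c → ℂ) : Prop := MemLp f 2 m ∧ ∀ n : ℤ, n < 0 → fourierCoeff f n = 0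

/-- Membership in `H²₋ = L² ⊖ H²`. -/
def InH2neg (f : 𝕋c → ℂ) : Prop := MemLp f 2 m ∧ ∀ n : ℤ, 0 ≤ n → fourierCoeff f n = 0

/-- Value of (the analytic extension of) `f` at a point `w` of the unit disk. -/
def evalD (f : 𝕋c → ℂ) (w : ℂ) : ℂ := ∑' n : ℕ, fourierCoeff f (n : ℤ) * w ^ n

/-- `p = P₋ g`: characterization of the negative Riesz projection via Fourier coefficients. -/
def IsPneg (g p : 𝕋c → ℂ) : Prop :=
  MemLp p 2 m ∧ (∀ n : ℤ, n < 0 → fourierCoeff p n = fourierCoeff g n) ∧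
    ∀ n : ℤ, 0 ≤ n → fourierCoeff p n = 0

/-- Analytic polynomials on the circle. -/
def IsAnalyticPoly (p : 𝕋c → ℂ) : Prop :=
  ∃ (N : ℕ) (c : ℕ → ℂ), p = fun t => ∑ j ∈ Finset.range N, c j * fourier (j : ℤ) t

/-- `φ` is outer: `φ ∈ H²` and `{φ·p : p analytic polynomial}` is `L²`-dense in `H²`. -/
def IsOuter (φ : 𝕋c → ℂ) : Prop :=
  InH2 φ ∧ ∀ g : 𝕋c → ℂ, InH2 g → ∀ ε : ℝ, 0 < ε →
    ∃ p, IsAnalyticPoly p ∧ ∫ t, ‖φ t * p t - g t‖ ^ 2 ∂m < ε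

/-- `f ∈ H²` is admissible: it vanishes at all but finitely many of the points `ζ k`. -/
def Admissible (ζ : ℕ → ℂ) (f : 𝕋c → ℂ) : Prop :=
  InH2 f ∧ {k | evalD f (ζ k) ≠ 0}.Finite

/-- The quadratic form `Q(f) = ‖f‖² − ‖P₋(Wf)‖² + Σ ν_k |f(ζ_k)|²`. -/
def Q (W : 𝕋c → ℂ) (ζ : ℕ → ℂ) (ν : ℕ → ℝ) (f : 𝕋c → ℂ) : ℝ :=
  sqNorm f - negSq (fun t => W t * f t) + ∑' k, ν k * ‖evalD f (ζ k)‖ ^ 2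

/-- `S(α) = sup{|ĉ(f,0)| : f admissible, Q_α(f) ≤ 1}`, the value at `0` of the normalized
reproducing kernel. -/
def S (W : 𝕋c → ℂ) (ζ : ℕ → ℂ) (ν : ℕ → ℝ) : ℝ :=
  sSup { x | ∃ f, Admissible ζ f ∧ Q W ζ ν f ≤ 1 ∧ x = ‖fourierCoeff f 0‖ }

/-- The Blaschke product with zeros `ζ k`. -/
def Bprod (ζ : ℕ → ℂ) (z : ℂ) : ℂ :=
  ∏' k, ((‖ζ k‖ : ℂ) / ζ k) * ((ζ k - z) / (1 - conj (ζ k) * z))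

/-- Membership of the pair `(f₁, f₂)` in the space `V = L²_R` (with `φ` the boundary values
of the Szegő outer function `T_e`). -/
def MemV (R φ f₁ f₂ : 𝕋c → ℂ) : Prop :=
  AEStronglyMeasurable f₁ m ∧ AEStronglyMeasurable f₂ m ∧
  MemLp (fun t => φ t * f₁ t) 2 m ∧
  MemLp (fun t => conj (φ t) * f₂ t) 2 m ∧
  (∀ n : ℤ, 0 ≤ n → fourierCoeff (fun t => conj (φ t) * f₂ t) n = 0) ∧
  MemLp (fun t => R t * f₁ t + f₂ t) 2 m ∧
  (∀ n : ℤ, n < 0 → fourierCoeff (fun t => R t * f₁ t + f₂ t) n = 0)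

/-- The squared `V`-norm `‖(f₁,f₂)‖_V² = ∫ (|Rf₁+f₂|² + |φf₁|²) dm`. -/
def VnormSq (R φ f₁ f₂ : 𝕋c → ℂ) : ℝ :=
  ∫ t, (‖R t * f₁ t + f₂ t‖ ^ 2 + ‖φ t * f₁ t‖ ^ 2) ∂m

/-- Membership of the triple `(f₁, f₂, {f_k})` in `L²(α)`. -/
def MemL2α (R φ : 𝕋c → ℂ) (ν : ℕ → ℝ) (f₁ f₂ : 𝕋c → ℂ) (fk : ℕ → ℂ) : Prop :=
  MemV R φ f₁ f₂ ∧ Summable (fun k => ν k * ‖fk k‖ ^ 2)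

/-- The squared norm on `L²(α)`. -/
def αnormSq (R φ : 𝕋c → ℂ) (ν : ℕ → ℝ) (f₁ f₂ : 𝕋c → ℂ) (fk : ℕ → ℂ) : ℝ :=
  VnormSq R φ f₁ f₂ + ∑' k, ν k * ‖fk k‖ ^ 2

/-- Membership in `čH²(α)`: the triple lies in `L²(α)` and is approximated in the `L²(α)`
norm by embedded admissible functions `ι(f) = (f, −P₋(Rf), {f(ζ_k)})`. -/
def MemCheckH2 (R φ : 𝕋c → ℂ) (ζ : ℕ → ℂ) (ν : ℕ → ℝ)
    (f₁ f₂ : 𝕋c → ℂ) (fk : ℕ → ℂ) : Prop :=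
  MemL2α R φ ν f₁ f₂ fk ∧
  ∀ ε : ℝ, 0 < ε → ∃ f p : 𝕋c → ℂ, Admissible ζ f ∧ IsPneg (fun t => R t * f t) p ∧
    VnormSq R φ (fun t => f₁ t - f t) (fun t => f₂ t + p t) +
      ∑' k, ν k * ‖fk k - evalD f (ζ k)‖ ^ 2 < ε

/-- Membership in `ĤH²(α)`: `g := φf₁ ∈ H²` and `f_k·φ(ζ_k) = g(ζ_k)` for all `k`. -/
def MemHatH2 (R φ : 𝕋c → ℂ) (ζ : ℕ → ℂ) (ν : ℕ → ℝ)
    (f₁ f₂ : 𝕋c → ℂ) (fk : ℕ → ℂ) : Prop :=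
  MemL2α R φ ν f₁ f₂ fk ∧
  (∀ n : ℤ, n < 0 → fourierCoeff (fun t => φ t * f₁ t) n = 0) ∧
  ∀ k, fk k * evalD φ (ζ k) = evalD (fun t => φ t * f₁ t) (ζ k)

/-- The dual coefficient `R^τ`; note that on the additive circle, `conj t` corresponds
to `−t`, so `R^τ(s) = −R(conj s)·conj(φ(conj s))·β(conj s)/φ(conj s)`. -/
def dualR (R φ β : 𝕋c → ℂ) : 𝕋c → ℂ := fun s => -R (-s) * conj (φ (-s)) * β (-s) / φ (-s)

/-- `φ^τ(t) = conj(φ(conj t))`. -/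
def dualφ (φ : 𝕋c → ℂ) : 𝕋c → ℂ := fun s => conj (φ (-s))

/-- `β^τ(t) = conj(β(conj t))`. -/
def dualβ (β : 𝕋c → ℂ) : 𝕋c → ℂ := fun s => conj (β (-s))

/-- The reflected points `conj ζ_k`. -/
def dualζ (ζ : ℕ → ℂ) : ℕ → ℂ := fun k => conj (ζ k)

/-- The dual masses `ν^τ_k = |T_e(ζ_k)/B′(ζ_k)|²/ν_k`. -/
def dualν (φ : 𝕋c → ℂ) (ζ : ℕ → ℂ) (ν : ℕ → ℝ) : ℕ → ℝ :=
  fun k => ‖evalD φ (ζ k) / deriv (Bprod ζ) (ζ k)‖ ^ 2 / ν k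

/-- The defining relations of the map `τ` on triples: on the circle
`f₁(t) + conj(R(t))f₂(t) = conj(φ(t))β(t)·conj(t)·f₁^τ(conj t)` and
`R(t)f₁(t) + f₂(t) = φ(t)·conj(t)·f₂^τ(conj t)` (here `conj t ↔ −t` and the complex
number `t` is `fourier 1 t`), and `f^τ_k = −conj(B′(ζ_k)/T_e(ζ_k))·f_k·ν_k`. -/
def TauRel (R φ β : 𝕋c → ℂ) (ζ : ℕ → ℂ) (ν : ℕ → ℝ)
    (f₁ f₂ : 𝕋c → ℂ) (fk : ℕ → ℂ) (h₁ h₂ : 𝕋c → ℂ) (hk : ℕ → ℂ) : Prop :=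
  (∀ᵐ t ∂m, f₁ t + conj (R t) * f₂ t = conj (φ t) * β t * fourier (-1) t * h₁ (-t) ∧
      R t * f₁ t + f₂ t = φ t * fourier (-1) t * h₂ (-t)) ∧
  ∀ k, hk k = -conj (deriv (Bprod ζ) (ζ k) / evalD φ (ζ k)) * fk k * ν k

/-- Membership in `L²(α) ⊖ čH²(α)`: a triple of `L²(α)` orthogonal to every embedded
admissible function. -/
def PerpCheck (R φ : 𝕋c → ℂ) (ζ : ℕ → ℂ) (ν : ℕ → ℝ)
    (f₁ f₂ : 𝕋c → ℂ) (fk : ℕ → ℂ) : Prop :=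
  MemL2α R φ ν f₁ f₂ fk ∧
  ∀ f p : 𝕋c → ℂ, Admissible ζ f → IsPneg (fun t => R t * f t) p →
    (∫ t, ((R t * f₁ t + f₂ t) * conj (R t * f t + -p t) +
        (φ t * f₁ t) * conj (φ t * f t)) ∂m) +
      ∑' k, (ν k : ℂ) * fk k * conj (evalD f (ζ k)) = 0

/-!
An element of `čH²(α)` is a limit of embedded admissible functions `ι(fₙ)`. Convergence in
`L²(α)` forces `φfₙ → φf₁` in `L²` and `fₙ(ζ_k) → f_k` for every `k`. Fourier coefficients and
point evaluations in the disc are continuous on `L²`, and `H²` is closed under multiplication by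
the bounded analytic function `φ`, so `φf₁ ∈ H²` and
`(φf₁)(ζ_k) = lim (φfₙ)(ζ_k) = lim φ(ζ_k) fₙ(ζ_k) = φ(ζ_k) f_k`.
Finally `φ(w) ≠ 0` in the disc because `φ` is outer: if `φ(w) = 0` then `(φp)(w) = 0` for every
analytic polynomial `p`, yet `φp` can be taken `L²`-close to `1`.
-/

open scoped ENNReal InnerProductSpace

section FourierCoeff

open AddCircle

variable {T : ℝ} [Fact (0 < T)]

theorem memLp_fourier (n : ℤ) : MemLp (fourier n : AddCircle T → ℂ) ⊤ haarAddCircle :=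
  memLp_top_of_bound (fourier n).continuous.aestronglyMeasurable 1
    (.of_forall fun _ => (Circle.norm_coe _).le)

theorem fourierCoeff_one : fourierCoeff (fun _ : AddCircle T => (1 : ℂ)) = Pi.single 0 1 := by
  rw [← fourierCoeff_fourier (T := T)]
  exact congrArg fourierCoeff (funext fun _ => fourier_zero.symm)

theorem fourierCoeff_sub {f g : AddCircle T → ℂ} (hf : Integrable f haarAddCircle)
    (hg : Integrable g haarAddCircle) (n : ℤ) :
    fourierCoeff (fun t => f t - g t) n = fourierCoeff f n - fourierCoeff g n := by
  simp only [fourierCoeff, smul_sub]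
  exact integral_sub (hf.fourier_smul _) (hg.fourier_smul _)

theorem hasSum_sq_fourierCoeff_of_memLp {f : AddCircle T → ℂ} (hf : MemLp f 2 haarAddCircle) :
    HasSum (fun i => ‖fourierCoeff f i‖ ^ 2) (∫ t, ‖f t‖ ^ 2 ∂haarAddCircle) := by
  have h := hasSum_sq_fourierCoeff (hf.toLp f)
  rwa [fourierCoeff_congr_ae hf.coeFn_toLp,
    integral_congr_ae (g := fun t => ‖f t‖ ^ 2)
      (hf.coeFn_toLp.mono fun t ht => by simp only [ht])] at h

theorem norm_fourierCoeff_le_sqrt_integral {f : AddCircle T → ℂ} (hf : MemLp f 2 haarAddCircle)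
    (n : ℤ) : ‖fourierCoeff f n‖ ≤ √(∫ t, ‖f t‖ ^ 2 ∂haarAddCircle) :=
  Real.le_sqrt_of_sq_le <|
    (hasSum_sq_fourierCoeff_of_memLp hf).summable.le_tsum n (fun _ _ => by positivity) |>.trans
      (hasSum_sq_fourierCoeff_of_memLp hf).tsum_eq.le

theorem tendsto_fourierCoeff_of_tendsto_integral_norm_sub_sq {ι : Type*} {l : Filter ι}
    {g : ι → AddCircle T → ℂ} {g₀ : AddCircle T → ℂ} (hg : ∀ i, MemLp (g i) 2 haarAddCircle)
    (hg₀ : MemLp g₀ 2 haarAddCircle)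
    (h : Tendsto (fun i => ∫ t, ‖g i t - g₀ t‖ ^ 2 ∂haarAddCircle) l (𝓝 0)) (n : ℤ) :
    Tendsto (fun i => fourierCoeff (g i) n) l (𝓝 (fourierCoeff g₀ n)) := by
  rw [tendsto_iff_norm_sub_tendsto_zero]
  refine squeeze_zero (fun _ => norm_nonneg _) (fun i => ?_) (by simpa using h.sqrt)
  rw [← fourierCoeff_sub ((hg i).integrable one_le_two) (hg₀.integrable one_le_two)]
  exact norm_fourierCoeff_le_sqrt_integral ((hg i).sub hg₀) n

-- Parseval's identity `⟪u, f⟫ = Σⱼ ⟪u, eⱼ⟫ ⟪eⱼ, f⟫` for `u = conj φ · eₙ`.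
theorem fourierCoeff_mul_eq_tsum {φ f : AddCircle T → ℂ} (hφ : MemLp φ 2 haarAddCircle)
    (hf : MemLp f 2 haarAddCircle) (n : ℤ) :
    fourierCoeff (fun t => φ t * f t) n = ∑' j, fourierCoeff φ (n - j) * fourierCoeff f j := by
  have hu : MemLp (fun t => conj (φ t) * fourier n t) 2 haarAddCircle :=
    (memLp_fourier n).mul' hφ.star
  have hcoeff_f (j : ℤ) : ⟪fourierBasis j, hf.toLp f⟫_ℂ = fourierCoeff f j := by
    rw [← fourierBasis.repr_apply_apply, fourierBasis_repr, fourierCoeff_congr_ae hf.coeFn_toLp]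
  have hcoeff_φ (j : ℤ) : ⟪hu.toLp _, fourierBasis j⟫_ℂ = fourierCoeff φ (n - j) := by
    rw [L2.inner_def, coe_fourierBasis]
    refine integral_congr_ae ?_
    filter_upwards [hu.coeFn_toLp, coeFn_fourierLp 2 j] with t ht ht'
    rw [RCLike.inner_apply, ht, ht', neg_sub, sub_eq_add_neg, fourier_add, fourier_neg]
    simp only [map_mul, Complex.conj_conj, smul_eq_mul]
    ring
  have hprod : ⟪hu.toLp _, hf.toLp f⟫_ℂ = fourierCoeff (fun t => φ t * f t) n := by
    rw [L2.inner_def]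
    refine integral_congr_ae ?_
    filter_upwards [hu.coeFn_toLp, hf.coeFn_toLp] with t ht ht'
    rw [RCLike.inner_apply, ht, ht', fourier_neg]
    simp only [map_mul, Complex.conj_conj, smul_eq_mul]
    ring
  rw [← hprod, ← fourierBasis.tsum_inner_mul_inner]
  simp only [hcoeff_f, hcoeff_φ]

theorem fourierCoeff_mul_eq_zero_of_neg {φ f : AddCircle T → ℂ} (hφ : MemLp φ 2 haarAddCircle)
    (hf : MemLp f 2 haarAddCircle) (hφ₀ : ∀ n < 0, fourierCoeff φ n = 0)
    (hf₀ : ∀ n < 0, fourierCoeff f n = 0) {n : ℤ} (hn : n < 0) :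
    fourierCoeff (fun t => φ t * f t) n = 0 := by
  rw [fourierCoeff_mul_eq_tsum hφ hf]
  convert tsum_zero with j
  rcases lt_or_ge j 0 with hj | hj
  · rw [hf₀ j hj, mul_zero]
  · rw [hφ₀ (n - j) (by omega), zero_mul]

open Finset in
theorem fourierCoeff_mul_natCast {φ f : AddCircle T → ℂ} (hφ : MemLp φ 2 haarAddCircle)
    (hf : MemLp f 2 haarAddCircle) (hφ₀ : ∀ n < 0, fourierCoeff φ n = 0)
    (hf₀ : ∀ n < 0, fourierCoeff f n = 0) (n : ℕ) :
    fourierCoeff (fun t => φ t * f t) n =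
      ∑ p ∈ antidiagonal n, fourierCoeff φ p.1 * fourierCoeff f p.2 := by
  rw [fourierCoeff_mul_eq_tsum hφ hf, ← Nat.sum_antidiagonal_swap]
  simp only [Prod.fst_swap, Prod.snd_swap]
  rw [Nat.sum_antidiagonal_eq_sum_range_succ (fun i j => fourierCoeff φ j * fourierCoeff f i),
    tsum_eq_sum (s := (range (n + 1)).map Nat.castEmbedding), sum_map]
  · refine sum_congr rfl fun k hk => ?_
    rw [mem_range] at hk
    simp [Nat.cast_sub (Nat.le_of_lt_succ hk)]
  · intro j hj
    rcases lt_or_ge j 0 with hj₀ | hj₀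
    · rw [hf₀ j hj₀, mul_zero]
    · refine mul_eq_zero_of_left (hφ₀ _ ?_) _
      contrapose! hj
      exact mem_map.2 ⟨j.toNat, mem_range.2 (by omega), by simp [hj₀]⟩

end FourierCoeff

section evalD

variable {f g : 𝕋c → ℂ} {w : ℂ}

theorem summable_norm_fourierCoeff_mul_pow (hf : MemLp f 2 m) (hw : ‖w‖ < 1) :
    Summable fun k : ℕ => ‖fourierCoeff f k * w ^ k‖ := by
  refine .of_nonneg_of_le (fun _ => norm_nonneg _) (fun k => ?_)
    ((summable_geometric_of_lt_one (norm_nonneg w) hw).mul_left (√(∫ t, ‖f t‖ ^ 2 ∂m)))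
  rw [norm_mul, norm_pow]
  gcongr
  exact norm_fourierCoeff_le_sqrt_integral hf k

theorem norm_evalD_le (hf : MemLp f 2 m) (hw : ‖w‖ < 1) :
    ‖evalD f w‖ ≤ √(∫ t, ‖f t‖ ^ 2 ∂m) / (1 - ‖w‖) := by
  rw [div_eq_mul_inv, ← tsum_geometric_of_lt_one (norm_nonneg w) hw, ← tsum_mul_left]
  refine (norm_tsum_le_tsum_norm (summable_norm_fourierCoeff_mul_pow hf hw)).trans ?_
  refine (summable_norm_fourierCoeff_mul_pow hf hw).tsum_le_tsum (fun k => ?_)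
    ((summable_geometric_of_lt_one (norm_nonneg w) hw).mul_left _)
  rw [norm_mul, norm_pow]
  gcongr
  exact norm_fourierCoeff_le_sqrt_integral hf k

theorem evalD_sub (hf : MemLp f 2 m) (hg : MemLp g 2 m) (hw : ‖w‖ < 1) :
    evalD (fun t => f t - g t) w = evalD f w - evalD g w := by
  simp only [evalD, fourierCoeff_sub (hf.integrable one_le_two) (hg.integrable one_le_two),
    sub_mul]
  exact (summable_norm_fourierCoeff_mul_pow hf hw).of_norm.tsum_sub
    (summable_norm_fourierCoeff_mul_pow hg hw).of_norm

open Finset in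
theorem evalD_mul (hf : InH2 f) (hg : InH2 g) (hw : ‖w‖ < 1) :
    evalD (fun t => f t * g t) w = evalD f w * evalD g w := by
  rw [evalD, evalD, evalD, tsum_mul_tsum_eq_tsum_sum_antidiagonal_of_summable_norm
    (summable_norm_fourierCoeff_mul_pow hf.1 hw) (summable_norm_fourierCoeff_mul_pow hg.1 hw)]
  refine tsum_congr fun n => ?_
  rw [fourierCoeff_mul_natCast hf.1 hg.1 hf.2 hg.2, Finset.sum_mul]
  refine Finset.sum_congr rfl fun p hp => ?_
  rw [← mem_antidiagonal.1 hp, pow_add]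
  ring

theorem evalD_one : evalD (fun _ => 1) w = 1 := by
  rw [evalD, fourierCoeff_one, tsum_eq_single 0 fun k hk => by simp [hk]]
  simp

theorem tendsto_evalD_of_tendsto_integral_norm_sub_sq {ι : Type*} {l : Filter ι}
    {g : ι → 𝕋c → ℂ} {g₀ : 𝕋c → ℂ} (hg : ∀ i, MemLp (g i) 2 m) (hg₀ : MemLp g₀ 2 m)
    (h : Tendsto (fun i => ∫ t, ‖g i t - g₀ t‖ ^ 2 ∂m) l (𝓝 0)) (hw : ‖w‖ < 1) :
    Tendsto (fun i => evalD (g i) w) l (𝓝 (evalD g₀ w)) := by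
  rw [tendsto_iff_norm_sub_tendsto_zero]
  refine squeeze_zero (fun _ => norm_nonneg _) (fun i => ?_)
    (by simpa using h.sqrt.div_const (1 - ‖w‖))
  rw [← evalD_sub (hg i) hg₀ hw]
  exact norm_evalD_le ((hg i).sub hg₀) hw

end evalD

theorem IsAnalyticPoly.memLp_top {p : 𝕋c → ℂ} (hp : IsAnalyticPoly p) : MemLp p ⊤ m := by
  obtain ⟨N, c, rfl⟩ := hp
  exact memLp_finsetSum _ fun (j : ℕ) _ => (memLp_fourier (j : ℤ)).const_mul (c j)

theorem IsAnalyticPoly.inH2 {p : 𝕋c → ℂ} (hp : IsAnalyticPoly p) : InH2 p := by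
  refine ⟨hp.memLp_top.mono_exponent le_top, fun n hn => ?_⟩
  obtain ⟨N, c, rfl⟩ := hp
  rw [← Finset.sum_fn, fourierCoeff.sum _ _ fun (j : ℕ) _ =>
    ((memLp_fourier (j : ℤ)).const_mul (c j)).integrable le_top, Finset.sum_apply]
  refine Finset.sum_eq_zero fun j _ => ?_
  rw [fourierCoeff.const_mul, fourierCoeff_fourier, Pi.single_apply, if_neg (by omega), mul_zero]

theorem IsOuter.evalD_ne_zero {φ : 𝕋c → ℂ} (hφ : IsOuter φ) {w : ℂ} (hw : ‖w‖ < 1) :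
    evalD φ w ≠ 0 := by
  intro hφw
  have hone : InH2 fun _ => (1 : ℂ) :=
    ⟨memLp_const 1, fun n hn => by simp [fourierCoeff_one, hn.ne]⟩
  choose p hp hclose using fun n : ℕ => hφ.2 _ hone (1 / (n + 1)) Nat.one_div_pos_of_nat
  have hφp (n : ℕ) : MemLp (fun t => φ t * p n t) 2 m := (hp n).memLp_top.mul' hφ.1.1
  have hlim : Tendsto (fun n => evalD (fun t => φ t * p n t) w) atTop (𝓝 1) := by
    rw [← evalD_one (w := w)]
    refine tendsto_evalD_of_tendsto_integral_norm_sub_sq hφp (memLp_const 1) ?_ hw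
    exact squeeze_zero (fun _ => integral_nonneg fun _ => by positivity)
      (fun n => (hclose n).le) tendsto_one_div_add_atTop_nhds_zero_nat
  have hzero (n : ℕ) : evalD (fun t => φ t * p n t) w = 0 := by
    rw [evalD_mul hφ.1 (hp n).inH2 hw, hφw, zero_mul]
  exact one_ne_zero (tendsto_nhds_unique hlim (by simp only [hzero]; exact tendsto_const_nhds))

theorem integral_norm_mul_sq_le_VnormSq {R φ g₁ g₂ : 𝕋c → ℂ}
    (hA : MemLp (fun t => R t * g₁ t + g₂ t) 2 m) (hB : MemLp (fun t => φ t * g₁ t) 2 m) :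
    ∫ t, ‖φ t * g₁ t‖ ^ 2 ∂m ≤ VnormSq R φ g₁ g₂ :=
  integral_mono (hB.integrable_norm_pow' (p := 2))
    ((hA.integrable_norm_pow' (p := 2)).add (hB.integrable_norm_pow' (p := 2)))
    fun _ => le_add_of_nonneg_left (sq_nonneg _)

theorem VnormSq_nonneg (R φ g₁ g₂ : 𝕋c → ℂ) : 0 ≤ VnormSq R φ g₁ g₂ :=
  integral_nonneg fun _ => by positivity

theorem summable_mul_norm_sub_sq {ι : Type*} {ν : ι → ℝ} {a b : ι → ℂ}
    (ha : Summable fun k => ν k * ‖a k‖ ^ 2) (hb : {k | b k ≠ 0}.Finite) :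
    Summable fun k => ν k * ‖a k - b k‖ ^ 2 :=
  ha.congr_cofinite <| hb.eventually_cofinite_notMem.mono fun k hk => by
    simp [not_not.1 hk]

theorem tendsto_of_mul_norm_sub_sq_le {ι : Type*} {l : Filter ι} {a : ι → ℂ} {b : ℂ} {c : ℝ}
    {u : ι → ℝ} (hc : 0 < c) (hu : Tendsto u l (𝓝 0)) (h : ∀ i, c * ‖b - a i‖ ^ 2 ≤ u i) :
    Tendsto a l (𝓝 b) := by
  rw [tendsto_iff_norm_sub_tendsto_zero]
  refine squeeze_zero (fun _ => norm_nonneg _) (fun i => Real.le_sqrt_of_sq_le ?_)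
    (by simpa using (hu.div_const c).sqrt)
  rw [norm_sub_rev, le_div_iff₀' hc]
  exact h i

theorem MemCheckH2.exists_tendsto {R φ : 𝕋c → ℂ} {ζ : ℕ → ℂ} {ν : ℕ → ℝ} {f₁ f₂ : 𝕋c → ℂ}
    {fk : ℕ → ℂ} (hRm : MemLp R ⊤ m) (hφ : MemLp φ ⊤ m) (hν : ∀ k, 0 < ν k)
    (hF : MemCheckH2 R φ ζ ν f₁ f₂ fk) :
    ∃ f : ℕ → 𝕋c → ℂ, (∀ n, InH2 (f n)) ∧
      Tendsto (fun n => ∫ t, ‖φ t * f n t - φ t * f₁ t‖ ^ 2 ∂m) atTop (𝓝 0) ∧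
      ∀ k, Tendsto (fun n => evalD (f n) (ζ k)) atTop (𝓝 (fk k)) := by
  obtain ⟨⟨⟨-, -, hφf₁, -, -, hRf₁, -⟩, hsum⟩, happrox⟩ := hF
  choose f p hadm hp hlt using fun n : ℕ => happrox (1 / (n + 1)) Nat.one_div_pos_of_nat
  have hV (n : ℕ) : ∫ t, ‖φ t * f n t - φ t * f₁ t‖ ^ 2 ∂m ≤
      VnormSq R φ (fun t => f₁ t - f n t) (fun t => f₂ t + p n t) := by
    have hfn := (hadm n).1.1
    have hA : MemLp (fun t => R t * (f₁ t - f n t) + (f₂ t + p n t)) 2 m := by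
      convert (hRf₁.sub (hfn.mul' hRm)).add (hp n).1 using 1
      funext t
      simp only [Pi.add_apply, Pi.sub_apply]
      ring
    have hB : MemLp (fun t => φ t * (f₁ t - f n t)) 2 m := by
      convert hφf₁.sub (hfn.mul' hφ) using 1
      funext t
      simp only [Pi.sub_apply, mul_sub]
    calc ∫ t, ‖φ t * f n t - φ t * f₁ t‖ ^ 2 ∂m = ∫ t, ‖φ t * (f₁ t - f n t)‖ ^ 2 ∂m := by
          simp only [norm_sub_rev (φ _ * f n _), mul_sub]
      _ ≤ _ := integral_norm_mul_sq_le_VnormSq hA hB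
  have hν_le (n k : ℕ) : ν k * ‖fk k - evalD (f n) (ζ k)‖ ^ 2 ≤
      ∑' j, ν j * ‖fk j - evalD (f n) (ζ j)‖ ^ 2 :=
    (summable_mul_norm_sub_sq hsum (hadm n).2).le_tsum k fun j _ => by
      have := hν j; positivity
  have hsum_nonneg (n : ℕ) : 0 ≤ ∑' j, ν j * ‖fk j - evalD (f n) (ζ j)‖ ^ 2 :=
    tsum_nonneg fun j => by have := hν j; positivity
  refine ⟨f, fun n => (hadm n).1, ?_, fun k => ?_⟩
  · refine squeeze_zero (fun _ => integral_nonneg fun _ => by positivity) (fun n => ?_)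
      tendsto_one_div_add_atTop_nhds_zero_nat
    linarith [hV n, hsum_nonneg n, hlt n]
  · refine tendsto_of_mul_norm_sub_sq_le (hν k) tendsto_one_div_add_atTop_nhds_zero_nat
      fun n => ?_
    linarith [hν_le n k, VnormSq_nonneg R φ (fun t => f₁ t - f n t) (fun t => f₂ t + p n t),
      hlt n]

theorem check_subset_hat_general (R : 𝕋c → ℂ) (hRm : MemLp R ⊤ m)
    (φ : 𝕋c → ℂ) (hφb : MemLp φ ⊤ m) (hφout : IsOuter φ)
    (ζ : ℕ → ℂ) (hζ : ∀ k, ‖ζ k‖ < 1)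
    (ν : ℕ → ℝ) (hν : ∀ k, 0 < ν k)
    (f₁ f₂ : 𝕋c → ℂ) (fk : ℕ → ℂ) (hF : MemCheckH2 R φ ζ ν f₁ f₂ fk) :
    (∀ n : ℤ, n < 0 → fourierCoeff (fun t => φ t * f₁ t) n = 0) ∧
      ∀ k, evalD φ (ζ k) ≠ 0 ∧
        fk k * evalD φ (ζ k) = evalD (fun t => φ t * f₁ t) (ζ k) := by
  obtain ⟨f, hf, hlim, hval⟩ := hF.exists_tendsto hRm hφb hν
  have hφf (n : ℕ) : MemLp (fun t => φ t * f n t) 2 m := (hf n).1.mul' hφb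
  have hφf₁ : MemLp (fun t => φ t * f₁ t) 2 m := hF.1.1.2.2.1
  refine ⟨fun j hj => ?_, fun k => ⟨hφout.evalD_ne_zero (hζ k), ?_⟩⟩
  · refine tendsto_nhds_unique
      (tendsto_fourierCoeff_of_tendsto_integral_norm_sub_sq hφf hφf₁ hlim j) ?_
    exact tendsto_const_nhds.congr fun n =>
      (fourierCoeff_mul_eq_zero_of_neg hφout.1.1 (hf n).1 hφout.1.2 (hf n).2 hj).symm
  · refine tendsto_nhds_unique ?_
      (tendsto_evalD_of_tendsto_integral_norm_sub_sq hφf hφf₁ hlim (hζ k))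
    exact ((hval k).mul_const (evalD φ (ζ k))).congr fun n => by
      rw [evalD_mul hφout.1 (hf n) (hζ k), mul_comm]

/-- Lemma 1.3: if `F = (f₁, f₂, {f_k}) ∈ čH²(α)` then `g := φf₁ ∈ H²`,
`φ(ζ_k) ≠ 0`, and `f_k·φ(ζ_k) = g(ζ_k)` for all `k`; in particular `čH²(α) ⊆ ĤH²(α)`. -/
theorem check_subset_hat (R : 𝕋c → ℂ) (hRm : MemLp R ⊤ m)
    (hR1 : ∀ᵐ t ∂m, ‖R t‖ ≤ 1)
    (hSz : Integrable (fun t => Real.log (1 - ‖R t‖)) m)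
    (φ : 𝕋c → ℂ) (hφb : MemLp φ ⊤ m) (hφout : IsOuter φ)
    (hφR : ∀ᵐ t ∂m, ‖φ t‖ ^ 2 = 1 - ‖R t‖ ^ 2)
    (hφ0 : ∃ c : ℝ, 0 < c ∧ fourierCoeff φ 0 = c)
    (ζ : ℕ → ℂ) (hζ : ∀ k, ‖ζ k‖ < 1) (hBl : Summable fun k => 1 - ‖ζ k‖)
    (ν : ℕ → ℝ) (hν : ∀ k, 0 < ν k)
    (f₁ f₂ : 𝕋c → ℂ) (fk : ℕ → ℂ) (hF : MemCheckH2 R φ ζ ν f₁ f₂ fk) :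
    (∀ n : ℤ, n < 0 → fourierCoeff (fun t => φ t * f₁ t) n = 0) ∧
      ∀ k, evalD φ (ζ k) ≠ 0 ∧
        fk k * evalD φ (ζ k) = evalD (fun t => φ t * f₁ t) (ζ k) :=
  check_subset_hat_general R hRm φ hφb hφout ζ hζ ν hν f₁ f₂ fk hF
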